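/- Let ε > 0, let η ≥ 10ε, let i ∈ εℤ², and let E ⊆ εℤ². If (#N_ε(j), #NN_ε(j)) ∈ {(3,2), (4,4)} for every j ∈ Z_ε(Q_η(i)) ∖ E, then E is locally flat in Q_{η−4ε}(i). -/

import Mathlib

open Set Filter MeasureTheory Metric
open scoped BigOperators ENNReal Topology

noncomputable section

attribute [local instance] Classical.propDecidable

/-- Two-dimensional Euclidean space. -/
abbrev E2 := EuclideanSpace ℝ (Fin 2)

/-- `x` is a point of the lattice `εℤ²`. -/
def lat2 (ε : ℝ) (x : E2) : Prop := ∀ k, ∃ n : ℤ, x k = ε * n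

/-- The half-open square `Q_ρ(x) = x + ρ[-1/2,1/2)²`. -/
def sq2 (ρ : ℝ) (x : E2) : Set E2 := {y | ∀ k, x k - ρ / 2 ≤ y k ∧ y k < x k + ρ / 2}

/-- `k̂ := k + ε(1/2,1/2)`. -/
def hat2 (ε : ℝ) (k : E2) : E2 := WithLp.toLp 2 (fun j => k j + ε / 2)

/-- The point `(a,b) ∈ ℝ²`. -/
def pt2 (a b : ℝ) : E2 := WithLp.toLp 2 (fun j => if j = 0 then a else b)

/-- The unoccupied nearest neighbours of `j` (lattice points outside the void set `E`
at Euclidean distance `ε`). -/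
def Nset (ε : ℝ) (E : Set E2) (j : E2) : Set E2 :=
  {p | lat2 ε p ∧ p ∉ E ∧ dist p j = ε}

/-- The unoccupied next-to-nearest neighbours of `j` (lattice points outside `E` at
Euclidean distance `√2·ε`). -/
def NNset (ε : ℝ) (E : Set E2) (j : E2) : Set E2 :=
  {p | lat2 ε p ∧ p ∉ E ∧ dist p j = Real.sqrt 2 * ε}

/-- `j` has one of the two admissible neighbourhood statistics `(3,2)` or `(4,4)`. -/
def goodPt (ε : ℝ) (E : Set E2) (j : E2) : Prop :=
  ((Nset ε E j).ncard = 3 ∧ (NNset ε E j).ncard = 2) ∨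
    ((Nset ε E j).ncard = 4 ∧ (NNset ε E j).ncard = 4)

/-- `E` is locally flat in `Q_η(x)` (two-dimensional version): on every `2ε`-square
`Q_{2ε}(k̂)` intersecting `Q_η(x)`, the set `E` is either everything, or empty, or one
of the four half-square pairs. -/
def LocallyFlat2 (ε η : ℝ) (E : Set E2) (x : E2) : Prop :=
  ∀ k : E2, lat2 ε k → (sq2 η x ∩ sq2 (2 * ε) (hat2 ε k)).Nonempty →
    E ∩ sq2 (2 * ε) (hat2 ε k) = {p | lat2 ε p ∧ p ∈ sq2 (2 * ε) (hat2 ε k)} ∨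
    E ∩ sq2 (2 * ε) (hat2 ε k) = ∅ ∨
    E ∩ sq2 (2 * ε) (hat2 ε k) = {k, pt2 (k 0 + ε) (k 1)} ∨
    E ∩ sq2 (2 * ε) (hat2 ε k) = {pt2 (k 0) (k 1 + ε), pt2 (k 0 + ε) (k 1 + ε)} ∨
    E ∩ sq2 (2 * ε) (hat2 ε k) = {k, pt2 (k 0) (k 1 + ε)} ∨
    E ∩ sq2 (2 * ε) (hat2 ε k) = {pt2 (k 0 + ε) (k 1), pt2 (k 0 + ε) (k 1 + ε)}

/-!
Rescale so that the lattice points near a `2ε`-square `Q_{2ε}(k̂)` become `ℤ²`, the square itself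
becoming `{0,1}²`, and keep writing `E` for the void set. For a site `p ∉ E` the statistics
`(3,2)` and `(4,4)` say: either exactly one neighbour and exactly two diagonal neighbours of `p`
lie in `E`, or none do. Hence no site outside `E` has two neighbours in `E`, which excludes three
void sites in `{0,1}²` and two diagonal ones. A single void corner `c` is excluded too: the site
opposite to `c` sees `c` diagonally, so it has a void neighbour just outside the square, and two
more forced steps produce a site outside `E` with two neighbours in `E`. The bound `η ≥ 10ε`
leaves room for the `4 × 4` window of sites these arguments inspect inside `Q_η(i)`.
-/

def sqDist (p q : ℤ × ℤ) : ℤ := (p.1 - q.1) ^ 2 + (p.2 - q.2) ^ 2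

def shell (p : ℤ × ℤ) (r : ℤ) : Set (ℤ × ℤ) := {q | sqDist q p = r}

/-- `(u, v)` is the image of the standard basis under a symmetry of `ℤ²`; lemmas stated for an
arbitrary frame cover all orientations at once. -/
def IsFrame (u v : ℤ × ℤ) : Prop :=
  u.1 ^ 2 + u.2 ^ 2 = 1 ∧ v.1 ^ 2 + v.2 ^ 2 = 1 ∧ u.1 * v.1 + u.2 * v.2 = 0

lemma sq_add_sq_eq_one_iff {a b : ℤ} :
    a ^ 2 + b ^ 2 = 1 ↔
      (a, b) = (1, 0) ∨ (a, b) = (-1, 0) ∨ (a, b) = (0, 1) ∨ (a, b) = (0, -1) := by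
  constructor
  · intro h
    obtain ⟨ha₁, ha₂⟩ : -1 ≤ a ∧ a ≤ 1 := by constructor <;> nlinarith [sq_nonneg b]
    obtain ⟨hb₁, hb₂⟩ : -1 ≤ b ∧ b ≤ 1 := by constructor <;> nlinarith [sq_nonneg a]
    interval_cases a <;> interval_cases b <;> simp_all
  · rintro (h | h | h | h) <;> simp_all [Prod.ext_iff]

lemma sq_add_sq_eq_two_iff {a b : ℤ} :
    a ^ 2 + b ^ 2 = 2 ↔
      (a, b) = (1, 1) ∨ (a, b) = (1, -1) ∨ (a, b) = (-1, 1) ∨ (a, b) = (-1, -1) := by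
  constructor
  · intro h
    obtain ⟨ha₁, ha₂⟩ : -1 ≤ a ∧ a ≤ 1 := by constructor <;> nlinarith [sq_nonneg b]
    obtain ⟨hb₁, hb₂⟩ : -1 ≤ b ∧ b ≤ 1 := by constructor <;> nlinarith [sq_nonneg a]
    interval_cases a <;> interval_cases b <;> simp_all
  · rintro (h | h | h | h) <;> simp_all [Prod.ext_iff]

namespace IsFrame

variable {u v : ℤ × ℤ}

lemma cases (hf : IsFrame u v) :
    (u = (1, 0) ∨ u = (-1, 0)) ∧ (v = (0, 1) ∨ v = (0, -1)) ∨
      (u = (0, 1) ∨ u = (0, -1)) ∧ (v = (1, 0) ∨ v = (-1, 0)) := by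
  obtain ⟨hu, hv, huv⟩ := hf
  obtain ⟨u₁, u₂⟩ := u
  obtain ⟨v₁, v₂⟩ := v
  rw [sq_add_sq_eq_one_iff] at hu hv
  rcases hu with hu | hu | hu | hu <;> rcases hv with hv | hv | hv | hv <;>
    simp only [Prod.ext_iff] at hu hv <;> simp_all

lemma swap (hf : IsFrame u v) : IsFrame v u := by
  obtain ⟨hu, hv, huv⟩ := hf
  exact ⟨hv, hu, by linarith⟩

lemma neg_left (hf : IsFrame u v) : IsFrame (-u) v := by
  obtain ⟨hu, hv, huv⟩ := hf
  exact ⟨by simpa using hu, hv, by simp; linarith⟩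

lemma neg_right (hf : IsFrame u v) : IsFrame u (-v) :=
  hf.swap.neg_left.swap

lemma shell_one_eq (hf : IsFrame u v) (p : ℤ × ℤ) :
    shell p 1 = {p + u, p - u, p + v, p - v} := by
  ext q
  obtain ⟨w, rfl⟩ : ∃ w, q = p + w := ⟨q - p, by abel⟩
  have hw : sqDist (p + w) p = w.1 ^ 2 + w.2 ^ 2 := by simp [sqDist]
  simp only [shell, mem_ofPred_eq, hw, sq_add_sq_eq_one_iff, mem_insert_iff, mem_singleton_iff]
  rcases hf.cases with ⟨hu | hu, hv | hv⟩ | ⟨hu | hu, hv | hv⟩ <;> subst hu hv <;>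
    simp only [Prod.ext_iff, Prod.fst_add, Prod.snd_add, Prod.fst_sub, Prod.snd_sub] <;> omega

lemma shell_two_eq (hf : IsFrame u v) (p : ℤ × ℤ) :
    shell p 2 = {p + u + v, p + u - v, p - u + v, p - u - v} := by
  ext q
  obtain ⟨w, rfl⟩ : ∃ w, q = p + w := ⟨q - p, by abel⟩
  have hw : sqDist (p + w) p = w.1 ^ 2 + w.2 ^ 2 := by simp [sqDist]
  simp only [shell, mem_ofPred_eq, hw, sq_add_sq_eq_two_iff, mem_insert_iff, mem_singleton_iff]
  rcases hf.cases with ⟨hu | hu, hv | hv⟩ | ⟨hu | hu, hv | hv⟩ <;> subst hu hv <;>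
    simp only [Prod.ext_iff, Prod.fst_add, Prod.snd_add, Prod.fst_sub, Prod.snd_sub] <;> omega

lemma add_ne (hf : IsFrame u v) (p : ℤ × ℤ) :
    p + u ≠ p - u ∧ p + u ≠ p + v ∧ p + u ≠ p - v := by
  rcases hf.cases with ⟨hu | hu, hv | hv⟩ | ⟨hu | hu, hv | hv⟩ <;> subst hu hv <;>
    simp only [ne_eq, Prod.ext_iff, Prod.fst_add, Prod.snd_add, Prod.fst_sub, Prod.snd_sub] <;>
    omega

end IsFrame

lemma isFrame_standard : IsFrame (1, 0) (0, 1) := by norm_num [IsFrame]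

lemma shell_finite (p : ℤ × ℤ) {r : ℤ} (hr : r = 1 ∨ r = 2) : (shell p r).Finite := by
  rcases hr with rfl | rfl
  · rw [isFrame_standard.shell_one_eq]; exact toFinite _
  · rw [isFrame_standard.shell_two_eq]; exact toFinite _

lemma ncard_shell_one (p : ℤ × ℤ) : (shell p 1).ncard = 4 := by
  rw [isFrame_standard.shell_one_eq, ncard_insert_of_notMem, ncard_insert_of_notMem, ncard_pair] <;>
    simp [Prod.ext_iff] <;> omega

lemma ncard_shell_two (p : ℤ × ℤ) : (shell p 2).ncard = 4 := by
  rw [isFrame_standard.shell_two_eq, ncard_insert_of_notMem, ncard_insert_of_notMem, ncard_pair] <;>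
    simp [Prod.ext_iff] <;> omega

/-- The rescaled form of `goodPt`, counting the neighbours in `E` rather than those outside. -/
def GoodAt (E : Set (ℤ × ℤ)) (p : ℤ × ℤ) : Prop :=
  p ∉ E →
    ((shell p 1 ∩ E).ncard = 1 ∧ (shell p 2 ∩ E).ncard = 2) ∨
      ((shell p 1 ∩ E).ncard = 0 ∧ (shell p 2 ∩ E).ncard = 0)

namespace GoodAt

variable {E : Set (ℤ × ℤ)} {p u v : ℤ × ℤ}

lemma ncard_eq_of_nonempty (hg : GoodAt E p) (hp : p ∉ E)
    (hne : (shell p 1 ∩ E).Nonempty ∨ (shell p 2 ∩ E).Nonempty) :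
    (shell p 1 ∩ E).ncard = 1 ∧ (shell p 2 ∩ E).ncard = 2 := by
  refine (hg hp).resolve_right fun ⟨h₁, h₂⟩ => ?_
  rw [ncard_eq_zero ((shell_finite p (.inl rfl)).inter_of_left E)] at h₁
  rw [ncard_eq_zero ((shell_finite p (.inr rfl)).inter_of_left E)] at h₂
  simp [h₁, h₂] at hne

lemma notMem_of_add_mem (hf : IsFrame u v) (hg : GoodAt E p) (hp : p ∉ E) (hu : p + u ∈ E) :
    p - u ∉ E ∧ p + v ∉ E ∧ p - v ∉ E := by
  have hle := (ncard_le_one ((shell_finite p (.inl rfl)).inter_of_left E)).1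
    (by rcases hg hp with ⟨h, -⟩ | ⟨h, -⟩ <;> omega)
  have heq : ∀ q ∈ ({p + u, p - u, p + v, p - v} : Set (ℤ × ℤ)), q ∈ E → p + u = q :=
    fun q hq hqE => hle _ ⟨by rw [hf.shell_one_eq]; simp, hu⟩ _ ⟨by rwa [hf.shell_one_eq], hqE⟩
  obtain ⟨h₁, h₂, h₃⟩ := hf.add_ne p
  exact ⟨fun h => h₁ (heq _ (by simp) h), fun h => h₂ (heq _ (by simp) h),
    fun h => h₃ (heq _ (by simp) h)⟩

lemma diag_mem_of_diag_notMem (hf : IsFrame u v) (hg : GoodAt E p) (hp : p ∉ E)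
    (hu : p + u ∈ E) (h₁ : p + u + v ∉ E) (h₂ : p - u + v ∉ E) :
    p + u - v ∈ E ∧ p - u - v ∈ E := by
  have hdiag := (hg.ncard_eq_of_nonempty hp (.inl ⟨p + u, by rw [hf.shell_one_eq]; simp, hu⟩)).2
  have hsub : shell p 2 ∩ E ⊆ {p + u - v, p - u - v} := by
    rintro q ⟨hq, hqE⟩
    rw [hf.shell_two_eq] at hq
    rcases hq with rfl | rfl | rfl | rfl
    exacts [absurd hqE h₁, .inl rfl, absurd hqE h₂, .inr rfl]
  have heq := eq_of_subset_of_ncard_le hsub (hdiag ▸ (ncard_insert_le _ _).trans (by simp))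
  exact ⟨(heq ▸ mem_insert _ _ : _ ∈ shell p 2 ∩ E).2,
    (heq ▸ mem_insert_of_mem _ rfl : _ ∈ shell p 2 ∩ E).2⟩

lemma add_mem_or_add_mem (hf : IsFrame u v) (hg : GoodAt E p) (hp : p ∉ E)
    (hc : p - u - v ∈ E) (h₁ : p - u ∉ E) (h₂ : p - v ∉ E) : p + u ∈ E ∨ p + v ∈ E := by
  have hone := (hg.ncard_eq_of_nonempty hp (.inr ⟨_, by rw [hf.shell_two_eq]; simp, hc⟩)).1
  obtain ⟨q, hq, hqE⟩ := nonempty_of_ncard_ne_zero (hone ▸ one_ne_zero)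
  rw [hf.shell_one_eq] at hq
  rcases hq with rfl | rfl | rfl | rfl
  exacts [.inl hqE, absurd hqE h₁, .inr hqE, absurd hqE h₂]

/-- The two diagonal neighbours of `p` forced into `E` are both neighbours of `p - v`. -/
lemma not_goodAt_sub (hf : IsFrame u v) (hg : GoodAt E p) (hp : p ∉ E)
    (hu : p + u ∈ E) (h₁ : p + u + v ∉ E) (h₂ : p - u + v ∉ E) : ¬ GoodAt E (p - v) := by
  intro hg'
  obtain ⟨hd₁, hd₂⟩ := hg.diag_mem_of_diag_notMem hf hp hu h₁ h₂
  have hv := (hg.notMem_of_add_mem hf hp hu).2.2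
  refine (hg'.notMem_of_add_mem hf hv (by rwa [show p - v + u = p + u - v by abel])).1 ?_
  rwa [show p - v - u = p - u - v by abel]

end GoodAt

/-- The two alternatives in `hgood` follow the row of `c` forwards, or the row of `c + v`
backwards, out of the square `c + {0, u} + {0, v}`. -/
lemma false_of_lone_corner {E : Set (ℤ × ℤ)} {c u v : ℤ × ℤ} (hf : IsFrame u v) (hc : c ∈ E)
    (h₁ : c + u ∉ E) (h₂ : c + v ∉ E) (h₃ : c + u + v ∉ E) (h₄ : c + u + u + v ∈ E)
    (hgood : (GoodAt E (c + u) ∧ GoodAt E (c + u + u) ∧ GoodAt E (c + u + u + u)) ∨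
      (GoodAt E (c + u + v) ∧ GoodAt E (c + v) ∧ GoodAt E (c + v - u))) : False := by
  rcases hgood with ⟨g₁, g₂, g₃⟩ | ⟨g₁, g₂, g₃⟩
  · obtain ⟨h₅, -, h₆⟩ := g₁.notMem_of_add_mem hf.neg_left h₁ (by rwa [add_neg_cancel_right])
    rw [sub_neg_eq_add] at h₅
    refine g₂.not_goodAt_sub hf.swap.neg_right h₅ h₄ ?_ ?_ (by rwa [sub_neg_eq_add])
    · rwa [show c + u + u + v + -u = c + u + v by abel]
    · rwa [show c + u + u - v + -u = c + u - v by abel]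
  · obtain ⟨-, h₅, -⟩ := g₁.notMem_of_add_mem hf h₃ (by rwa [add_right_comm])
    refine g₂.not_goodAt_sub hf.swap.neg_left h₂ (by rwa [add_neg_cancel_right]) ?_ ?_ g₃
    · rwa [show c + v + -v + u = c + u by abel]
    · rwa [show c + v - -v + u = c + u + v + v by abel]

def window (s₁ s₂ : ℤ) : Set (ℤ × ℤ) := Icc s₁ (s₁ + 3) ×ˢ Icc s₂ (s₂ + 3)

def unitSquare : Set (ℤ × ℤ) := {(0, 0), (1, 0), (0, 1), (1, 1)}

section Window

/- In the next two lemmas `(a, b)` is a corner of `unitSquare` and `(d, 0)`, `(0, e)` are the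
steps from it along the two sides of the square. -/

variable {E : Set (ℤ × ℤ)} {s₁ s₂ : ℤ}

lemma false_of_two_nbrs_mem_of_window (hs₁ : s₁ ∈ Icc (-2) 0) (hs₂ : s₂ ∈ Icc (-2) 0)
    (hW : ∀ p ∈ window s₁ s₂, GoodAt E p) (a b d e : ℤ)
    (had : a = 0 ∧ d = 1 ∨ a = 1 ∧ d = -1) (hbe : b = 0 ∧ e = 1 ∨ b = 1 ∧ e = -1)
    (hc : (a, b) ∉ E) (h₁ : (a + d, b) ∈ E) (h₂ : (a, b + e) ∈ E) : False := by
  have hf : IsFrame (d, 0) (0, e) := by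
    rcases had with ⟨-, rfl⟩ | ⟨-, rfl⟩ <;> rcases hbe with ⟨-, rfl⟩ | ⟨-, rfl⟩ <;>
      norm_num [IsFrame]
  simp only [mem_Icc] at hs₁ hs₂
  have hg : GoodAt E (a, b) := hW _ ⟨⟨by omega, by omega⟩, ⟨by omega, by omega⟩⟩
  exact (hg.notMem_of_add_mem hf hc (by simpa)).2.1 (by simpa)

lemma false_of_lone_corner_of_window (hs₁ : s₁ ∈ Icc (-2) 0) (hs₂ : s₂ ∈ Icc (-2) 0)
    (hW : ∀ p ∈ window s₁ s₂, GoodAt E p) (a b d e : ℤ)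
    (had : a = 0 ∧ d = 1 ∨ a = 1 ∧ d = -1) (hbe : b = 0 ∧ e = 1 ∨ b = 1 ∧ e = -1)
    (hc : (a, b) ∈ E) (h₁ : (a + d, b) ∉ E) (h₂ : (a, b + e) ∉ E)
    (h₃ : (a + d, b + e) ∉ E) : False := by
  have hf : IsFrame (d, 0) (0, e) := by
    rcases had with ⟨-, rfl⟩ | ⟨-, rfl⟩ <;> rcases hbe with ⟨-, rfl⟩ | ⟨-, rfl⟩ <;>
      norm_num [IsFrame]
  simp only [mem_Icc] at hs₁ hs₂
  have hmem : ∀ p : ℤ × ℤ, s₁ ≤ p.1 → p.1 ≤ s₁ + 3 → s₂ ≤ p.2 → p.2 ≤ s₂ + 3 → GoodAt E p :=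
    fun p h₁ h₂ h₃ h₄ => hW p ⟨⟨h₁, h₂⟩, ⟨h₃, h₄⟩⟩
  have hg := hmem (a + d, b + e) (by simp; omega) (by simp; omega) (by simp; omega) (by simp; omega)
  rcases hg.add_mem_or_add_mem hf h₃ (by simpa) (by simpa) (by simpa) with h₄ | h₄
  · refine false_of_lone_corner hf hc (by simpa) (by simpa) (by simpa)
      (by convert h₄ using 1; ext <;> simp) ?_
    by_cases hroom : s₁ ≤ a - d ∧ a - d ≤ s₁ + 3
    · refine .inr ⟨hmem _ ?_ ?_ ?_ ?_, hmem _ ?_ ?_ ?_ ?_, hmem _ ?_ ?_ ?_ ?_⟩ <;> simp <;> omega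
    · refine .inl ⟨hmem _ ?_ ?_ ?_ ?_, hmem _ ?_ ?_ ?_ ?_, hmem _ ?_ ?_ ?_ ?_⟩ <;> simp <;> omega
  · refine false_of_lone_corner hf.swap hc (by simpa) (by simpa) (by simpa [add_comm])
      (by convert h₄ using 1; ext <;> simp) ?_
    by_cases hroom : s₂ ≤ b - e ∧ b - e ≤ s₂ + 3
    · refine .inr ⟨hmem _ ?_ ?_ ?_ ?_, hmem _ ?_ ?_ ?_ ?_, hmem _ ?_ ?_ ?_ ?_⟩ <;> simp <;> omega
    · refine .inl ⟨hmem _ ?_ ?_ ?_ ?_, hmem _ ?_ ?_ ?_ ?_, hmem _ ?_ ?_ ?_ ?_⟩ <;> simp <;> omega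

theorem unitSquare_inter_eq (hs₁ : s₁ ∈ Icc (-2) 0) (hs₂ : s₂ ∈ Icc (-2) 0)
    (hW : ∀ p ∈ window s₁ s₂, GoodAt E p) :
    unitSquare ∩ E = unitSquare ∨ unitSquare ∩ E = ∅ ∨
      unitSquare ∩ E = {(0, 0), (1, 0)} ∨ unitSquare ∩ E = {(0, 1), (1, 1)} ∨
      unitSquare ∩ E = {(0, 0), (0, 1)} ∨ unitSquare ∩ E = {(1, 0), (1, 1)} := by
  have two := false_of_two_nbrs_mem_of_window hs₁ hs₂ hW
  have corner := false_of_lone_corner_of_window hs₁ hs₂ hW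
  by_cases e₀₀ : ((0, 0) : ℤ × ℤ) ∈ E <;> by_cases e₁₀ : ((1, 0) : ℤ × ℤ) ∈ E <;>
    by_cases e₀₁ : ((0, 1) : ℤ × ℤ) ∈ E <;> by_cases e₁₁ : ((1, 1) : ℤ × ℤ) ∈ E
  all_goals simp only [unitSquare, insert_inter_of_mem, insert_inter_of_notMem,
    singleton_inter_of_mem, singleton_inter_of_notMem, e₀₀, e₁₀, e₀₁, e₁₁, not_false_eq_true]
  · simp
  · exact (two 1 1 (-1) (-1) (by norm_num) (by norm_num) e₁₁ (by simpa) (by simpa)).elim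
  · exact (two 0 1 1 (-1) (by norm_num) (by norm_num) e₀₁ (by simpa) (by simpa)).elim
  · simp
  · exact (two 1 0 (-1) 1 (by norm_num) (by norm_num) e₁₀ (by simpa) (by simpa)).elim
  · simp
  · exact (two 1 0 (-1) 1 (by norm_num) (by norm_num) e₁₀ (by simpa) (by simpa)).elim
  · exact (corner 0 0 1 1 (by norm_num) (by norm_num) e₀₀ (by simpa) (by simpa) (by simpa)).elim
  · exact (two 0 0 1 1 (by norm_num) (by norm_num) e₀₀ (by simpa) (by simpa)).elim
  · exact (two 0 0 1 1 (by norm_num) (by norm_num) e₀₀ (by simpa) (by simpa)).elim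
  · simp
  · exact (corner 1 0 (-1) 1 (by norm_num) (by norm_num) e₁₀ (by simpa) (by simpa) (by simpa)).elim
  · simp
  · exact (corner 0 1 1 (-1) (by norm_num) (by norm_num) e₀₁ (by simpa) (by simpa) (by simpa)).elim
  · exact (corner 1 1 (-1) (-1) (by norm_num) (by norm_num) e₁₁ (by simpa) (by simpa)
      (by simpa)).elim
  · simp

end Window

section Embedding

variable {ε : ℝ} {k : E2}

def latticePt (ε : ℝ) (k : E2) (z : ℤ × ℤ) : E2 := pt2 (k 0 + ε * z.1) (k 1 + ε * z.2)

@[simp] lemma latticePt_apply_zero (z : ℤ × ℤ) : latticePt ε k z 0 = k 0 + ε * z.1 := by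
  simp [latticePt, pt2]

@[simp] lemma latticePt_apply_one (z : ℤ × ℤ) : latticePt ε k z 1 = k 1 + ε * z.2 := by
  simp [latticePt, pt2]

lemma pt2_self (k : E2) : pt2 (k 0) (k 1) = k := by
  ext j; fin_cases j <;> simp [pt2]

lemma dist_latticePt (hε : 0 ≤ ε) (z w : ℤ × ℤ) :
    dist (latticePt ε k z) (latticePt ε k w) = ε * √(sqDist z w : ℝ) := by
  rw [EuclideanSpace.dist_eq, Fin.sum_univ_two, Real.dist_eq, Real.dist_eq, sq_abs, sq_abs]
  simp only [latticePt_apply_zero, latticePt_apply_one, sqDist]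
  conv_rhs => rw [← Real.sqrt_sq hε, ← Real.sqrt_mul (sq_nonneg ε)]
  congr 1
  push_cast
  ring

lemma latticePt_injective (hε : ε ≠ 0) : (latticePt ε k).Injective := by
  intro z w h
  have h₀ := congrArg (· 0) h
  have h₁ := congrArg (· 1) h
  simp only [latticePt_apply_zero, latticePt_apply_one, add_right_inj, mul_right_inj' hε,
    Int.cast_inj] at h₀ h₁
  exact Prod.ext h₀ h₁

lemma lat2_latticePt (hk : lat2 ε k) (z : ℤ × ℤ) : lat2 ε (latticePt ε k z) := by
  intro j
  fin_cases j
  · obtain ⟨n, hn⟩ := hk 0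
    exact ⟨n + z.1, by simp [hn]; ring⟩
  · obtain ⟨n, hn⟩ := hk 1
    exact ⟨n + z.2, by simp [hn]; ring⟩

lemma exists_latticePt (hk : lat2 ε k) {q : E2} (hq : lat2 ε q) :
    ∃ z, latticePt ε k z = q := by
  obtain ⟨a, ha⟩ := hk 0
  obtain ⟨b, hb⟩ := hk 1
  obtain ⟨c, hc⟩ := hq 0
  obtain ⟨d, hd⟩ := hq 1
  refine ⟨(c - a, d - b), ?_⟩
  ext j; fin_cases j
  · simp [ha, hc]; ring
  · simp [hb, hd]; ring

lemma setOf_dist_eq_image (hε : 0 < ε) (hk : lat2 ε k) (E : Set E2) (p : ℤ × ℤ) {r : ℤ}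
    (hr : 0 ≤ r) :
    {q | lat2 ε q ∧ q ∉ E ∧ dist q (latticePt ε k p) = ε * √(r : ℝ)} =
      latticePt ε k '' (shell p r \ latticePt ε k ⁻¹' E) := by
  ext q
  constructor
  · rintro ⟨hq, hqE, hd⟩
    obtain ⟨z, rfl⟩ := exists_latticePt hk hq
    rw [dist_latticePt hε.le, mul_right_inj' hε.ne',
      Real.sqrt_inj (by unfold sqDist; positivity) (by exact_mod_cast hr)] at hd
    exact ⟨z, ⟨by exact_mod_cast hd, hqE⟩, rfl⟩
  · rintro ⟨z, ⟨hz, hzE⟩, rfl⟩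
    refine ⟨lat2_latticePt hk z, hzE, ?_⟩
    rw [dist_latticePt hε.le, show sqDist z p = r from hz]

lemma ncard_notMem_add_ncard_inter (hε : 0 < ε) (hk : lat2 ε k) (E : Set E2) (p : ℤ × ℤ)
    {r : ℤ} (hr : r = 1 ∨ r = 2) :
    {q | lat2 ε q ∧ q ∉ E ∧ dist q (latticePt ε k p) = ε * √(r : ℝ)}.ncard +
      (shell p r ∩ latticePt ε k ⁻¹' E).ncard = 4 := by
  rw [setOf_dist_eq_image hε hk E p (by omega),
    ncard_image_of_injective _ (latticePt_injective hε.ne'), add_comm,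
    ncard_inter_add_ncard_sdiff_eq_ncard _ _ (shell_finite p hr)]
  rcases hr with rfl | rfl
  exacts [ncard_shell_one p, ncard_shell_two p]

lemma goodAt_of_goodPt (hε : 0 < ε) (hk : lat2 ε k) {E : Set E2} {p : ℤ × ℤ}
    (h : latticePt ε k p ∉ E → goodPt ε E (latticePt ε k p)) :
    GoodAt (latticePt ε k ⁻¹' E) p := by
  intro hp
  have h₁ := ncard_notMem_add_ncard_inter hε hk E p (r := 1) (.inl rfl)
  have h₂ := ncard_notMem_add_ncard_inter hε hk E p (r := 2) (.inr rfl)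
  simp only [Int.cast_one, Real.sqrt_one, mul_one, Int.cast_ofNat] at h₁ h₂
  rw [mul_comm] at h₂
  rcases h hp with ⟨hN, hNN⟩ | ⟨hN, hNN⟩
  · exact .inl ⟨by unfold Nset at hN; omega, by unfold NNset at hNN; omega⟩
  · exact .inr ⟨by unfold Nset at hN; omega, by unfold NNset at hNN; omega⟩

end Embedding

section Squares

variable {ε η : ℝ} {k : E2}

lemma mem_unitSquare_iff {z : ℤ × ℤ} :
    z ∈ unitSquare ↔ (z.1 = 0 ∨ z.1 = 1) ∧ (z.2 = 0 ∨ z.2 = 1) := by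
  obtain ⟨a, b⟩ := z
  simp only [unitSquare, mem_insert_iff, mem_singleton_iff, Prod.mk.injEq]
  omega

lemma coord_mem_sq2_hat2_iff (hε : 0 < ε) (x : ℝ) (n : ℤ) :
    (x + ε / 2 - 2 * ε / 2 ≤ x + ε * n ∧ x + ε * n < x + ε / 2 + 2 * ε / 2) ↔ n = 0 ∨ n = 1 := by
  constructor
  · rintro ⟨h₁, h₂⟩
    have h₃ : (-1 : ℝ) < n := by nlinarith
    have h₄ : (n : ℝ) < 2 := by nlinarith
    have : -1 < n := by exact_mod_cast h₃
    have : n < 2 := by exact_mod_cast h₄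
    omega
  · rintro (rfl | rfl) <;> constructor <;> simp <;> linarith

lemma latticePt_mem_sq2_iff (hε : 0 < ε) {z : ℤ × ℤ} :
    latticePt ε k z ∈ sq2 (2 * ε) (hat2 ε k) ↔ z ∈ unitSquare := by
  simp only [sq2, hat2, mem_ofPred_eq, Fin.forall_fin_two, mem_unitSquare_iff,
    latticePt_apply_zero, latticePt_apply_one, coord_mem_sq2_hat2_iff hε]

lemma setOf_lat2_mem_sq2_eq_image (hε : 0 < ε) (hk : lat2 ε k) :
    {p | lat2 ε p ∧ p ∈ sq2 (2 * ε) (hat2 ε k)} = latticePt ε k '' unitSquare := by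
  ext q
  constructor
  · rintro ⟨hq, hsq⟩
    obtain ⟨z, rfl⟩ := exists_latticePt hk hq
    exact ⟨z, (latticePt_mem_sq2_iff hε).1 hsq, rfl⟩
  · rintro ⟨z, hz, rfl⟩
    exact ⟨lat2_latticePt hk z, (latticePt_mem_sq2_iff hε).2 hz⟩

lemma inter_sq2_eq_image (hε : 0 < ε) (hk : lat2 ε k) {E : Set E2} (hE : ∀ x ∈ E, lat2 ε x) :
    E ∩ sq2 (2 * ε) (hat2 ε k) = latticePt ε k '' (unitSquare ∩ latticePt ε k ⁻¹' E) := by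
  rw [image_inter_preimage, ← setOf_lat2_mem_sq2_eq_image hε hk]
  ext q
  exact ⟨fun ⟨hq, hsq⟩ => ⟨⟨hE q hq, hsq⟩, hq⟩, fun ⟨⟨_, hsq⟩, hq⟩ => ⟨hq, hsq⟩⟩

/-- Along one axis: the `2ε`-square meets `Q_{η-4ε}`, so either the two lattice sites before it
or the two after it still lie in `Q_η`. -/
lemma exists_window_coord (hε : 0 < ε) (hη : 10 * ε ≤ η) {c x y : ℝ}
    (hy : c - (η - 4 * ε) / 2 ≤ y ∧ y < c + (η - 4 * ε) / 2)
    (hxy : x + ε / 2 - 2 * ε / 2 ≤ y ∧ y < x + ε / 2 + 2 * ε / 2) :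
    ∃ s ∈ Icc (-2 : ℤ) 0, ∀ m ∈ Icc s (s + 3), c - η / 2 ≤ x + ε * m ∧ x + ε * m < c + η / 2 := by
  by_cases hroom : c - η / 2 ≤ x - 2 * ε
  · refine ⟨-2, by norm_num, fun m hm => ?_⟩
    have h₁ : (-2 : ℝ) ≤ m := by exact_mod_cast hm.1
    have h₂ : (m : ℝ) ≤ 1 := by exact_mod_cast (by linarith [hm.2] : m ≤ 1)
    constructor <;> nlinarith
  · refine ⟨0, by norm_num, fun m hm => ?_⟩
    have h₁ : (0 : ℝ) ≤ m := by exact_mod_cast hm.1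
    have h₂ : (m : ℝ) ≤ 3 := by exact_mod_cast (by linarith [hm.2] : m ≤ 3)
    constructor <;> nlinarith

lemma exists_window (hε : 0 < ε) (hη : 10 * ε ≤ η) {i : E2}
    (hne : (sq2 (η - 4 * ε) i ∩ sq2 (2 * ε) (hat2 ε k)).Nonempty) :
    ∃ s₁ ∈ Icc (-2 : ℤ) 0, ∃ s₂ ∈ Icc (-2 : ℤ) 0,
      ∀ z ∈ window s₁ s₂, latticePt ε k z ∈ sq2 η i := by
  obtain ⟨y, hy, hy'⟩ := hne
  obtain ⟨s₁, hs₁, h₁⟩ := exists_window_coord hε hη (hy 0) (by simpa [hat2] using hy' 0)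
  obtain ⟨s₂, hs₂, h₂⟩ := exists_window_coord hε hη (hy 1) (by simpa [hat2] using hy' 1)
  refine ⟨s₁, hs₁, s₂, hs₂, fun z hz j => ?_⟩
  fin_cases j
  · simpa using h₁ z.1 hz.1
  · simpa using h₂ z.2 hz.2

end Squares

theorem statement10_general (ε η : ℝ) (hε : 0 < ε) (hη : 10 * ε ≤ η)
    (i : E2)
    (E : Set E2) (hE : ∀ x ∈ E, lat2 ε x)
    (hgood : ∀ j : E2, lat2 ε j → j ∈ sq2 η i → j ∉ E → goodPt ε E j) :
    LocallyFlat2 ε (η - 4 * ε) E i := by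
  intro k hk hne
  obtain ⟨s₁, hs₁, s₂, hs₂, hwin⟩ := exists_window hε hη hne
  have hW : ∀ z ∈ window s₁ s₂, GoodAt (latticePt ε k ⁻¹' E) z := fun z hz =>
    goodAt_of_goodPt hε hk (hgood _ (lat2_latticePt hk z) (hwin z hz))
  rw [inter_sq2_eq_image hε hk hE]
  rcases unitSquare_inter_eq hs₁ hs₂ hW with h | h | h | h | h | h <;> rw [h]
  · exact .inl (setOf_lat2_mem_sq2_eq_image hε hk).symm
  · exact .inr (.inl (image_empty _))
  · exact .inr (.inr (.inl (by simp [image_insert_eq, pt2_self, latticePt])))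
  · exact .inr (.inr (.inr (.inl (by simp [image_insert_eq, latticePt]))))
  · exact .inr (.inr (.inr (.inr (.inl (by simp [image_insert_eq, pt2_self, latticePt])))))
  · exact .inr (.inr (.inr (.inr (.inr (by simp [image_insert_eq, latticePt])))))

/-- EAM example.  If every unoccupied lattice point of `Q_η(i)` has
neighbourhood statistics `(3,2)` or `(4,4)`, then `E` is locally flat in
`Q_{η-4ε}(i)`. -/
theorem statement10 (ε η : ℝ) (hε : 0 < ε) (hη : 10 * ε ≤ η)
    (i : E2) (hi : lat2 ε i)
    (E : Set E2) (hE : ∀ x ∈ E, lat2 ε x)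
    (hgood : ∀ j : E2, lat2 ε j → j ∈ sq2 η i → j ∉ E → goodPt ε E j) :
    LocallyFlat2 ε (η - 4 * ε) E i :=
  statement10_general ε η hε hη i E hE hgood
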